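/- For any prime p, positive integer a, and positive integer n divisible by p, the congruence (-x)^{n+1}·∑_{k=1}^{p^a-1} B_k(x)/(-n-1)^k ≡ -∑_{r=1}^{a} x^{p^r}·∑_{k=0}^{n} (n!/k!)·(-x)^k (mod p·Z_p[x]) holds, noting that n!/k! ≡ 0 (mod p) for all 0 ≤ k ≤ n-1 and -n-1 ≡ -1 (mod p). -/

import Mathlib

/-!
Reduce modulo `p`: `(-n-1)⁻¹ ^ k` becomes `(-1) ^ k` and `n! / k!` vanishes unless `k = n`, so the
claim becomes `X * ∑_{k=1}^{p^a-1} (-1)^k B_k = ∑_{r=1}^a X^{p^r}` in `𝔽_p[X]`.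

Bell polynomials satisfy `B_{n+1} = L B_n` for `L f = X (f + f')`. Touchard's congruence
`B_{k+p} = B_{k+1} + X^p B_k`, which rests on `S(p,k) ≡ 0` for `1 < k < p`, iterates to
`B_{k+p^a} = B_{k+1} + (X^p + ⋯ + X^{p^a}) B_k`: if `L + W` shifts Bell indices by `p^a`, then
`(L + W)^p = L^p + W^p` shifts them by `p^{a+1}`, because `L` commutes with multiplication by `W`
(`W' = 0`). Finally `L + 1` is injective and telescopes the alternating sum,
`(L + 1) ∑_{k<m} (-1)^k B_k = 1 - (-1)^m B_m`, so for `m = p^a` both sides of the reduced identity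
have the same image under `L + 1`.
-/

/-- Stirling numbers of the second kind. -/
def stirling2 : ℕ → ℕ → ℕ
  | 0, 0 => 1
  | 0, _ + 1 => 0
  | _ + 1, 0 => 0
  | n + 1, k + 1 => (k + 1) * stirling2 n (k + 1) + stirling2 n k

/-- The Bell polynomial `B_n(x) = ∑_{k=0}^n S(n,k) x^k`. -/
noncomputable def bellPoly (R : Type*) [CommRing R] (n : ℕ) : Polynomial R :=
  ∑ k ∈ Finset.range (n + 1), Polynomial.C (stirling2 n k : R) * Polynomial.X ^ k

open Finset Polynomial
open scoped Nat

theorem stirling2_eq_stirlingSecond : stirling2 = Nat.stirlingSecond := by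
  funext n k
  induction n generalizing k with
  | zero => cases k <;> rfl
  | succ n ih => cases k <;> simp [stirling2, Nat.stirlingSecond_succ_succ, ih]

theorem Nat.mul_descFactorial (m k : ℕ) :
    m * m.descFactorial k = m.descFactorial (k + 1) + k * m.descFactorial k := by
  rcases lt_or_ge m k with hmk | hkm
  · simp [Nat.descFactorial_eq_zero_iff_lt.2 hmk]
  · rw [Nat.descFactorial_succ, ← add_mul, Nat.sub_add_cancel hkm]

theorem Nat.pow_eq_sum_stirlingSecond_mul_descFactorial (m n : ℕ) :
    m ^ n = ∑ k ∈ range (n + 1), stirlingSecond n k * m.descFactorial k := by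
  induction n with
  | zero => simp
  | succ n ih =>
    have hshift : ∑ k ∈ range (n + 1), stirlingSecond n k * (k * m.descFactorial k) =
        ∑ k ∈ range (n + 1), (k + 1) * stirlingSecond n (k + 1) * m.descFactorial (k + 1) := by
      rw [sum_range_succ', sum_range_succ, stirlingSecond_eq_zero_of_lt (lt_add_one n)]
      simp only [mul_left_comm, mul_assoc, zero_mul, mul_zero, add_zero]
    rw [pow_succ', ih, mul_sum, sum_range_succ' _ (n + 1)]
    simp_rw [mul_left_comm m, Nat.mul_descFactorial, mul_add, sum_add_distrib, hshift,
      stirlingSecond_succ_succ, stirlingSecond_succ_zero, zero_mul, add_zero, add_mul,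
      sum_add_distrib, add_comm]

theorem Nat.stirlingSecond_mul_factorial_eq_sum (n j : ℕ) :
    ((stirlingSecond n j * j ! : ℕ) : ℤ) =
      ∑ i ∈ range (j + 1), (-1) ^ (j - i) * j.choose i * (i : ℤ) ^ n := by
  have hpow : (fun m : ℕ => (m : ℤ) ^ n) =
      ∑ k ∈ range (n + 1), (stirlingSecond n k * k !) • fun m : ℕ => (m.choose k : ℤ) := by
    ext m
    simp [← Nat.cast_pow, Nat.pow_eq_sum_stirlingSecond_mul_descFactorial,
      Nat.descFactorial_eq_factorial_mul_choose, mul_assoc]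
  have hnewton := fwdDiff_iter_eq_sum_shift 1 (fun m : ℕ => (m : ℤ) ^ n) j 0
  simp only [smul_eq_mul, zero_add, mul_one] at hnewton
  rw [← hnewton, hpow, fwdDiff_iter_finsetSum, Finset.sum_apply]
  simp only [fwdDiff_iter_const_smul, Pi.smul_apply, fwdDiff_iter_choose_zero, smul_ite,
    smul_zero, sum_ite_eq, mem_range]
  split_ifs with hjn
  · simp
  · simp [stirlingSecond_eq_zero_of_lt (by omega : n < j)]

theorem Nat.stirlingSecond_prime_cast_eq_zero {p k : ℕ} [Fact p.Prime] (hk₁ : 1 < k)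
    (hkp : k < p) : (stirlingSecond p k : ZMod p) = 0 := by
  have hfac : (k ! : ZMod p) ≠ 0 := by
    rw [Ne, ZMod.natCast_eq_zero_iff, Nat.Prime.dvd_factorial Fact.out]
    omega
  have key :
      ((stirlingSecond p k * k ! : ℕ) : ZMod p) = ((stirlingSecond 1 k * k ! : ℕ) : ZMod p) := by
    rw [← Int.cast_natCast, stirlingSecond_mul_factorial_eq_sum, ← Int.cast_natCast,
      stirlingSecond_mul_factorial_eq_sum]
    push_cast [ZMod.pow_card, pow_one]
    rfl
  rw [stirlingSecond_eq_zero_of_lt hk₁, zero_mul, Nat.cast_mul, Nat.cast_zero] at key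
  simpa [hfac] using key

theorem Finset.sum_Icc_one_eq_sum_range {M : Type*} [AddCommMonoid M] (f : ℕ → M) (n : ℕ) :
    ∑ i ∈ Icc 1 n, f i = ∑ i ∈ range n, f (i + 1) := by
  rw [range_eq_Ico, sum_Ico_add', zero_add, Ico_add_one_right_eq_Icc]

section Bell

variable {R : Type*} [CommRing R]

theorem map_bellPoly {S : Type*} [CommRing S] (f : R →+* S) (n : ℕ) :
    (bellPoly R n).map f = bellPoly S n := by
  simp [bellPoly, Polynomial.map_sum]

theorem bellPoly_coeff (n k : ℕ) : (bellPoly R n).coeff k = stirling2 n k := by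
  simp only [bellPoly, finsetSum_coeff, coeff_C_mul_X_pow, sum_ite_eq, mem_range]
  split_ifs with hk
  · rfl
  · rw [stirling2_eq_stirlingSecond, Nat.stirlingSecond_eq_zero_of_lt (by omega), Nat.cast_zero]

theorem bellPoly_zero : bellPoly R 0 = 1 := by
  simp [bellPoly, stirling2]

theorem bellPoly_succ (n : ℕ) :
    bellPoly R (n + 1) = X * (bellPoly R n + derivative (bellPoly R n)) := by
  ext (_ | k)
  · simp [bellPoly_coeff, stirling2]
  · simp only [bellPoly_coeff, coeff_X_mul, coeff_add, coeff_derivative,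
      stirling2_eq_stirlingSecond, Nat.stirlingSecond_succ_succ]
    push_cast
    ring

theorem bellPoly_prime (p : ℕ) [Fact p.Prime] : bellPoly (ZMod p) p = X + X ^ p := by
  have hp := (Fact.out : p.Prime).two_le
  ext k
  rw [bellPoly_coeff, stirling2_eq_stirlingSecond, coeff_add, coeff_X, coeff_X_pow]
  rcases lt_trichotomy k p with hkp | rfl | hpk
  · rw [if_neg hkp.ne, add_zero]
    rcases k with _ | _ | k
    · obtain ⟨q, rfl⟩ := Nat.exists_eq_add_of_lt hkp
      rw [Nat.stirlingSecond_succ_zero, if_neg one_ne_zero, Nat.cast_zero]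
    · obtain ⟨q, rfl⟩ := Nat.exists_eq_add_of_lt hkp
      rw [Nat.stirlingSecond_one_right, if_pos rfl, Nat.cast_one]
    · rw [Nat.stirlingSecond_prime_cast_eq_zero (by omega) hkp, if_neg (by omega)]
  · rw [Nat.stirlingSecond_self, if_neg (by omega), if_pos rfl, zero_add, Nat.cast_one]
  · rw [Nat.stirlingSecond_eq_zero_of_lt hpk, if_neg (by omega), if_neg hpk.ne', add_zero,
      Nat.cast_zero]

end Bell

section BellOp

variable (R : Type*) [CommRing R]

noncomputable def bellOp : Module.End R R[X] := LinearMap.mulLeft R X * (1 + derivative)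

variable {R}

theorem bellOp_apply (f : R[X]) : bellOp R f = X * (f + derivative f) := rfl

theorem bellOp_bellPoly (m : ℕ) : bellOp R (bellPoly R m) = bellPoly R (m + 1) :=
  (bellPoly_succ m).symm

theorem bellOp_mul_of_derivative_eq_zero {w : R[X]} (hw : derivative w = 0) (f : R[X]) :
    bellOp R (w * f) = w * bellOp R f := by
  rw [bellOp_apply, bellOp_apply, derivative_mul, hw]
  ring

theorem bellOp_X_pow (m : ℕ) : bellOp R (X ^ m) = X ^ (m + 1) + (m : R[X]) * X ^ m := by
  rw [bellOp_apply, derivative_X_pow]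
  rcases m with _ | m
  · simp
  · simp only [Nat.cast_add, Nat.cast_one, map_add, map_natCast, map_one, add_tsub_cancel_right]
    ring

theorem pow_apply_bellPoly_of_forall_apply_bellPoly {E : Module.End R R[X]} {d : ℕ}
    (hE : ∀ m, E (bellPoly R m) = bellPoly R (m + d)) (j m : ℕ) :
    (E ^ j) (bellPoly R m) = bellPoly R (m + j * d) := by
  induction j with
  | zero => simp
  | succ j ih => rw [pow_succ', Module.End.mul_apply, ih, hE, add_mul, one_mul, add_assoc]

theorem bellOp_add_one_injective : Function.Injective (bellOp R + 1 : Module.End R R[X]) := by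
  refine (injective_iff_map_eq_zero _).2 fun f hf => ?_
  by_contra hne
  have hcoeff := congrArg (coeff · (f.natDegree + 1)) hf
  simp only [LinearMap.add_apply, Module.End.one_apply, bellOp_apply, coeff_add, coeff_X_mul,
    coeff_derivative, coeff_natDegree_succ_eq_zero, zero_mul, add_zero, coeff_zero] at hcoeff
  exact hne (leadingCoeff_eq_zero.1 hcoeff)

theorem bellOp_add_one_sum_neg_one_pow_mul_bellPoly (m : ℕ) :
    (bellOp R + 1 : Module.End R R[X]) (∑ k ∈ range m, (-1) ^ k * bellPoly R k) =
      1 - (-1) ^ m * bellPoly R m := by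
  induction m with
  | zero => simp [bellPoly_zero]
  | succ m ih =>
    have hsign : derivative ((-1) ^ m : R[X]) = 0 := by simp [derivative_pow]
    rw [sum_range_succ, map_add, ih, LinearMap.add_apply, bellOp_mul_of_derivative_eq_zero hsign,
      bellOp_bellPoly, Module.End.one_apply]
    ring

end BellOp

section PrimeCharacteristic

variable (p : ℕ) [Fact p.Prime]

theorem bellPoly_add_prime (k : ℕ) :
    bellPoly (ZMod p) (k + p) = bellPoly (ZMod p) (k + 1) + X ^ p * bellPoly (ZMod p) k := by
  induction k with
  | zero => rw [zero_add, bellPoly_prime, ← bellOp_bellPoly, bellOp_apply, bellPoly_zero]; simp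
  | succ k ih =>
    have hXp : derivative (X ^ p : (ZMod p)[X]) = 0 := by simp [derivative_X_pow]
    rw [add_right_comm, ← bellOp_bellPoly, ih, map_add, bellOp_mul_of_derivative_eq_zero hXp,
      bellOp_bellPoly, bellOp_bellPoly]

theorem derivative_X_pow_prime_pow (r : ℕ) :
    derivative (X ^ (p ^ (r + 1)) : (ZMod p)[X]) = 0 := by
  simp [derivative_X_pow, pow_succ]

theorem sum_X_pow_prime_pow_succ (a : ℕ) :
    ∑ r ∈ range (a + 1), (X : (ZMod p)[X]) ^ (p ^ (r + 1)) =
      X ^ p + (∑ r ∈ range a, X ^ (p ^ (r + 1))) ^ p := by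
  rw [sum_range_succ', sum_pow_char, zero_add, pow_one, add_comm]
  simp only [← pow_mul, ← pow_succ]

theorem bellPoly_add_prime_pow (a k : ℕ) :
    bellPoly (ZMod p) (k + p ^ a) =
      bellPoly (ZMod p) (k + 1) + (∑ r ∈ range a, X ^ (p ^ (r + 1))) * bellPoly (ZMod p) k := by
  induction a generalizing k with
  | zero => simp
  | succ a ih =>
    let _ : CharP (Module.End (ZMod p) (ZMod p)[X]) p :=
      charP_of_injective_algebraMap (algebraMap (ZMod p) _).injective p
    set W : (ZMod p)[X] := ∑ r ∈ range a, X ^ (p ^ (r + 1))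
    have hW : derivative W = 0 := by simp [W, derivative_X_pow_prime_pow]
    have hcomm : Commute (bellOp (ZMod p)) (LinearMap.mulLeft (ZMod p) W) :=
      LinearMap.ext fun f => bellOp_mul_of_derivative_eq_zero hW f
    have hE := pow_apply_bellPoly_of_forall_apply_bellPoly
      (E := bellOp (ZMod p) + LinearMap.mulLeft (ZMod p) W) (fun m => by
        rw [LinearMap.add_apply, LinearMap.mulLeft_apply, bellOp_bellPoly, ih]) p k
    rw [add_pow_char_of_commute _ hcomm, LinearMap.pow_mulLeft, LinearMap.add_apply,
      LinearMap.mulLeft_apply, pow_apply_bellPoly_of_forall_apply_bellPoly bellOp_bellPoly,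
      mul_one, bellPoly_add_prime] at hE
    rw [pow_succ', ← hE, sum_X_pow_prime_pow_succ]
    ring

theorem bellOp_add_one_X_pow_prime_pow_sub_one (r : ℕ) :
    (bellOp (ZMod p) + 1 : Module.End (ZMod p) (ZMod p)[X]) (X ^ (p ^ (r + 1) - 1)) =
      X ^ (p ^ (r + 1)) := by
  have hpr : p ^ (r + 1) - 1 + 1 = p ^ (r + 1) :=
    Nat.sub_add_cancel (Nat.one_le_pow _ _ (Fact.out : p.Prime).pos)
  have hchar : ((p ^ (r + 1) - 1 : ℕ) : (ZMod p)[X]) + 1 = 0 := by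
    rw [← Nat.cast_add_one, hpr, CharP.cast_eq_zero_iff _ p]
    exact dvd_pow_self p r.succ_ne_zero
  rw [LinearMap.add_apply, bellOp_X_pow, Module.End.one_apply, hpr, add_assoc, ← add_one_mul,
    hchar, zero_mul, add_zero]

theorem sum_range_prime_pow_neg_one_pow_mul_bellPoly (a : ℕ) :
    ∑ k ∈ range (p ^ a), (-1) ^ k * bellPoly (ZMod p) k =
      1 + ∑ r ∈ range a, X ^ (p ^ (r + 1) - 1) := by
  apply bellOp_add_one_injective
  have hBell := bellPoly_add_prime_pow p a 0
  rw [zero_add, zero_add, ← bellOp_bellPoly, bellPoly_zero, bellOp_apply] at hBell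
  rw [bellOp_add_one_sum_neg_one_pow_mul_bellPoly, neg_one_pow_char_pow, map_add, map_sum,
    hBell, LinearMap.add_apply, bellOp_apply]
  simp only [bellOp_add_one_X_pow_prime_pow_sub_one, derivative_one, Module.End.one_apply]
  ring

theorem X_mul_sum_Icc_neg_one_pow_mul_bellPoly (a : ℕ) :
    X * ∑ k ∈ Icc 1 (p ^ a - 1), (-1) ^ k * bellPoly (ZMod p) k = ∑ r ∈ Icc 1 a, X ^ (p ^ r) := by
  have hpos (r : ℕ) : 1 ≤ p ^ r := Nat.one_le_pow _ _ (Fact.out : p.Prime).pos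
  have h := sum_range_prime_pow_neg_one_pow_mul_bellPoly p a
  rw [← Nat.sub_add_cancel (hpos a), sum_range_succ', pow_zero, one_mul, bellPoly_zero,
    add_comm _ 1, add_right_inj] at h
  rw [Finset.sum_Icc_one_eq_sum_range, h, mul_sum, Finset.sum_Icc_one_eq_sum_range]
  refine sum_congr rfl fun r _ => ?_
  rw [← pow_succ', Nat.sub_add_cancel (hpos _)]

end PrimeCharacteristic

theorem map_ringInverse {R S F : Type*} [MonoidWithZero R] [MonoidWithZero S] [FunLike F R S]
    [MonoidWithZeroHomClass F R S] (f : F) [IsLocalHom f] (x : R) :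
    f (Ring.inverse x) = Ring.inverse (f x) := by
  by_cases hx : IsUnit x
  · calc f (Ring.inverse x) = Ring.inverse (f x) * (f x * f (Ring.inverse x)) := by
          rw [Ring.inverse_mul_cancel_left _ _ (hx.map f)]
      _ = Ring.inverse (f x) := by rw [← map_mul, Ring.mul_inverse_cancel x hx, map_one, mul_one]
  · rw [Ring.inverse_non_unit x hx, Ring.inverse_non_unit _ (mt (isUnit_of_map_unit f x) hx),
      map_zero]

theorem PadicInt.natCast_dvd_iff_map_toZMod_eq_zero {p : ℕ} [Fact p.Prime] (f : ℤ_[p][X]) :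
    (p : ℤ_[p][X]) ∣ f ↔ f.map PadicInt.toZMod = 0 := by
  rw [← coe_mapRingHom, ← RingHom.mem_ker, ker_mapRingHom, PadicInt.ker_toZMod,
    PadicInt.maximalIdeal_eq_span_p, Ideal.map_span, Set.image_singleton,
    Ideal.mem_span_singleton, map_natCast]

theorem Nat.dvd_factorial_div_factorial {n k : ℕ} (hk : k < n) : n ∣ n ! / k ! := by
  obtain ⟨m, rfl⟩ := Nat.exists_eq_add_of_lt hk
  rw [Nat.factorial_succ, Nat.mul_div_assoc _ (Nat.factorial_dvd_factorial (by omega))]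
  exact dvd_mul_right _ _

theorem sum_range_factorial_div_mul_pow {R : Type*} [CommRing R] {n : ℕ} (hn : (n : R) = 0)
    (x : R) : ∑ k ∈ range (n + 1), ((n ! / k ! : ℕ) : R) * x ^ k = x ^ n := by
  rw [sum_range_succ, Nat.div_self (Nat.factorial_pos n), Nat.cast_one, one_mul, add_eq_right]
  refine sum_eq_zero fun k hk => ?_
  obtain ⟨c, hc⟩ := Nat.dvd_factorial_div_factorial (mem_range.1 hk)
  rw [hc, Nat.cast_mul, hn, zero_mul, zero_mul]

open Polynomial in
theorem p_dvd_n_case_general (p : ℕ) [Fact p.Prime] (a n : ℕ)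
    (hpn : p ∣ n) :
    (p : Polynomial ℤ_[p]) ∣
      (-X) ^ (n + 1) * (∑ k ∈ Finset.Icc 1 (p ^ a - 1),
          Polynomial.C (Ring.inverse ((-(n : ℤ_[p]) - 1) ^ k)) * bellPoly ℤ_[p] k) -
        (-(∑ r ∈ Finset.Icc 1 a, X ^ (p ^ r) *
            ∑ k ∈ Finset.range (n + 1),
              Polynomial.C ((n.factorial / k.factorial : ℕ) : ℤ_[p]) * (-X) ^ k)) := by
  have hnp : (n : ZMod p) = 0 := (ZMod.natCast_eq_zero_iff n p).2 hpn
  rw [PadicInt.natCast_dvd_iff_map_toZMod_eq_zero]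
  simp only [Polynomial.map_sub, Polynomial.map_mul, Polynomial.map_neg, Polynomial.map_pow,
    Polynomial.map_sum, map_X, Polynomial.map_C, map_bellPoly]
  simp only [map_ringInverse PadicInt.toZMod, map_pow, map_sub, map_neg, map_natCast, map_one, hnp]
  have hnX : (n : (ZMod p)[X]) = 0 := by rw [← map_natCast C, hnp, map_zero]
  simp only [neg_zero, zero_sub, ← Ring.inverse_pow, Ring.inverse_eq_inv', inv_neg_one, map_pow,
    map_neg, map_one, sum_range_factorial_div_mul_pow hnX, ← sum_mul,
    ← X_mul_sum_Icc_neg_one_pow_mul_bellPoly]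
  ring

open Polynomial in
/-- For a prime `p`, `a ≥ 1`, and `n ≥ 1` with `p ∣ n`,
`(-x)^{n+1}·∑_{k=1}^{p^a-1} B_k(x)/(-n-1)^k ≡ -∑_{r=1}^a x^{p^r}·∑_{k=0}^n (n!/k!)(-x)^k`
mod `p·ℤ_p[x]`. -/
theorem p_dvd_n_case (p : ℕ) [Fact p.Prime] (a n : ℕ) (ha : 0 < a) (hn : 0 < n)
    (hpn : p ∣ n) :
    (p : Polynomial ℤ_[p]) ∣
      (-X) ^ (n + 1) * (∑ k ∈ Finset.Icc 1 (p ^ a - 1),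
          Polynomial.C (Ring.inverse ((-(n : ℤ_[p]) - 1) ^ k)) * bellPoly ℤ_[p] k) -
        (-(∑ r ∈ Finset.Icc 1 a, X ^ (p ^ r) *
            ∑ k ∈ Finset.range (n + 1),
              Polynomial.C ((n.factorial / k.factorial : ℕ) : ℤ_[p]) * (-X) ^ k)) :=
  p_dvd_n_case_general p a n hpn
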